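/- arXiv:1103.1282 — 3 statements merged into one kernel-verified Lean document; each statement's English description precedes it below -/
import Mathlib

section
/- Let X be a Banach space with a 1-unconditional Schauder basis (e_n). Then the closed unit ball B_X is a slicely countably determined (SCD) set; that is, there exists a countable family of relatively weakly open subsets {V_n} of B_X such that every slice of B_X contains some V_n (equivalently, any closed convex subset of B_X meeting every V_n must equal B_X after taking closed convex hull). -/
/-!
Unconditionality makes `x ↦ 2 P_n x - x` an isometry, where `P_n` is the `n`-th partial-sum
projection. Hence `f x ≥ 2 f (P_n x) - 1` whenever `‖f‖ ≤ 1` and `‖x‖ ≤ 1`: a point of the ball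
whose first `n` coordinates are close to those of a point `x₀` deep in a slice, with `P_n x₀`
close to `x₀`, lies in the slice as well. Prescribing finitely many coordinates up to a rational
error, around rational values, gives countably many relatively weakly open sets.
-/

open Metric Set Finset Filter Topology

section

variable {X : Type*} [NormedAddCommGroup X] [NormedSpace ℝ X]

def unitBallSlice (f : X →L[ℝ] ℝ) (α : ℝ) : Set X := {x ∈ closedBall (0 : X) 1 | 1 - α < f x}

theorem isOpen_toWeakSpace_image_setOf_forall_abs_sub_lt {ι : Type*} [Finite ι]
    (f : ι → X →L[ℝ] ℝ) (a : ι → ℝ) (r : ℝ) :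
    IsOpen (toWeakSpace ℝ X '' {x | ∀ i, |f i x - a i| < r}) := by
  have hcont : ∀ i, Continuous fun φ : WeakSpace ℝ X => f i ((toWeakSpace ℝ X).symm φ) :=
    fun i => WeakBilin.eval_continuous _ (f i)
  rw [(toWeakSpace ℝ X).image_eq_preimage_symm, preimage_ofPred_eq, ofPred_forall]
  exact isOpen_iInter_of_finite fun i =>
    isOpen_lt (continuous_abs.comp ((hcont i).sub continuous_const)) continuous_const

theorem exists_seq_nonempty_subset_unitBallSlice_of_countable {ι : Type*} [Countable ι]
    [Nonempty ι] (U : ι → Set (WeakSpace ℝ X)) (hU : ∀ i, IsOpen (U i))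
    (hslice : ∀ f : X →L[ℝ] ℝ, ‖f‖ = 1 → ∀ α : ℝ, 0 < α → ∃ i,
      (closedBall (0 : X) 1 ∩ toWeakSpace ℝ X ⁻¹' U i).Nonempty ∧
      closedBall (0 : X) 1 ∩ toWeakSpace ℝ X ⁻¹' U i ⊆ unitBallSlice f α) :
    ∃ V : ℕ → Set X,
      (∀ n, (V n).Nonempty ∧
        ∃ U : Set (WeakSpace ℝ X), IsOpen U ∧
          V n = closedBall (0 : X) 1 ∩ (toWeakSpace ℝ X ⁻¹' U)) ∧
      (∀ (f : X →L[ℝ] ℝ), ‖f‖ = 1 → ∀ α : ℝ, 0 < α →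
        ∃ n, V n ⊆ unitBallSlice f α) := by
  classical
  obtain ⟨σ, hσ⟩ := exists_surjective_nat ι
  let U' : ℕ → Set (WeakSpace ℝ X) := fun n =>
    if (closedBall (0 : X) 1 ∩ toWeakSpace ℝ X ⁻¹' U (σ n)).Nonempty then U (σ n) else univ
  refine ⟨fun n => closedBall (0 : X) 1 ∩ toWeakSpace ℝ X ⁻¹' U' n, fun n => ?_, ?_⟩
  · by_cases h : (closedBall (0 : X) 1 ∩ toWeakSpace ℝ X ⁻¹' U (σ n)).Nonempty
    · simp only [U', if_pos h]
      exact ⟨h, U (σ n), hU _, rfl⟩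
    · simp only [U', if_neg h, preimage_univ, inter_univ]
      exact ⟨nonempty_closedBall.2 zero_le_one, univ, isOpen_univ, (inter_univ _).symm⟩
  · intro f hf α hα
    obtain ⟨i, hne, hsub⟩ := hslice f hf α hα
    obtain ⟨n, rfl⟩ := hσ i
    exact ⟨n, by simpa only [U', if_pos hne] using hsub⟩

theorem ContinuousLinearMap.abs_apply_sub_apply_le {f : X →L[ℝ] ℝ} (hf : ‖f‖ ≤ 1) (u v : X) :
    |f u - f v| ≤ ‖u - v‖ := by
  simpa [map_sub] using f.le_of_opNorm_le hf (u - v)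

theorem ContinuousLinearMap.exists_norm_le_one_lt_apply (f : X →L[ℝ] ℝ) {r : ℝ} (hr : r < ‖f‖) :
    ∃ x : X, ‖x‖ ≤ 1 ∧ r < f x := by
  obtain ⟨x, hx, hfx⟩ := f.exists_lt_apply_of_lt_opNorm hr
  rcases le_or_gt 0 (f x) with h | h
  · exact ⟨x, hx.le, by rwa [Real.norm_of_nonneg h] at hfx⟩
  · exact ⟨-x, by rw [norm_neg]; exact hx.le, by rwa [Real.norm_of_nonpos h.le, ← map_neg] at hfx⟩

namespace SchauderBasis

variable (e : ℕ → X) (c : ℕ → X →L[ℝ] ℝ)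

def partialSum (n : ℕ) (x : X) : X := ∑ j ∈ range n, c j x • e j

theorem tendsto_partialSum (hbasis : ∀ x : X, HasSum (fun n => c n x • e n) x) (x : X) :
    Tendsto (fun n => partialSum e c n x) atTop (𝓝 x) :=
  (hbasis x).tendsto_sum_nat

theorem norm_partialSum_sub_partialSum_le {n : ℕ} {x y : X} {δ : ℝ}
    (h : ∀ j < n, |c j x - c j y| ≤ δ) :
    ‖partialSum e c n x - partialSum e c n y‖ ≤ δ * ∑ j ∈ range n, ‖e j‖ := by
  rw [partialSum, partialSum, ← sum_sub_distrib, mul_sum]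
  refine (norm_sum_le _ _).trans (sum_le_sum fun j hj => ?_)
  rw [← sub_smul, norm_smul, Real.norm_eq_abs]
  exact mul_le_mul_of_nonneg_right (h j (mem_range.1 hj)) (norm_nonneg _)

/-- Flipping the signs of the coordinates beyond `n` maps `x` to `2 P_n x - x`. -/
theorem norm_two_smul_partialSum_sub (hbasis : ∀ x : X, HasSum (fun n => c n x • e n) x)
    (huncond : ∀ (x y : X) (θ : ℕ → ℝ), (∀ n, |θ n| = 1) →
      HasSum (fun n => θ n • c n x • e n) y → ‖y‖ = ‖x‖) (n : ℕ) (x : X) :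
    ‖(2 : ℝ) • partialSum e c n x - x‖ = ‖x‖ := by
  have hP : HasSum (fun j => if j ∈ range n then c j x • e j else 0) (partialSum e c n x) := by
    simpa +contextual [partialSum] using
      hasSum_sum_of_ne_finset_zero (L := SummationFilter.unconditional ℕ) (s := range n)
        (f := fun j => if j ∈ range n then c j x • e j else 0) (fun j hj => if_neg hj)
  refine huncond x _ (fun j => if j < n then 1 else -1) (fun j => by split_ifs <;> simp) ?_
  convert (hP.const_smul (2 : ℝ)).sub (hbasis x) using 2 with j
  by_cases h : j < n <;> simp [h, two_smul]

theorem two_mul_apply_partialSum_sub_one_le (hbasis : ∀ x : X, HasSum (fun n => c n x • e n) x)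
    (huncond : ∀ (x y : X) (θ : ℕ → ℝ), (∀ n, |θ n| = 1) →
      HasSum (fun n => θ n • c n x • e n) y → ‖y‖ = ‖x‖)
    {f : X →L[ℝ] ℝ} (hf : ‖f‖ ≤ 1) (n : ℕ) {x : X} (hx : ‖x‖ ≤ 1) :
    2 * f (partialSum e c n x) - 1 ≤ f x := by
  have h : f ((2 : ℝ) • partialSum e c n x - x) ≤ 1 :=
    calc f ((2 : ℝ) • partialSum e c n x - x)
        ≤ 1 * ‖(2 : ℝ) • partialSum e c n x - x‖ := (le_abs_self _).trans (f.le_of_opNorm_le hf _)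
      _ ≤ 1 := by rw [one_mul, norm_two_smul_partialSum_sub e c hbasis huncond]; exact hx
  rw [map_sub, map_smul, smul_eq_mul] at h
  linarith

def coordNbhd (p : (Σ n : ℕ, Fin n → ℚ) × ℚ) : Set X :=
  {x | ∀ j : Fin p.1.1, |c j x - p.1.2 j| < p.2}

theorem exists_coordNbhd_subset_unitBallSlice (hbasis : ∀ x : X, HasSum (fun n => c n x • e n) x)
    (huncond : ∀ (x y : X) (θ : ℕ → ℝ), (∀ n, |θ n| = 1) →
      HasSum (fun n => θ n • c n x • e n) y → ‖y‖ = ‖x‖)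
    {f : X →L[ℝ] ℝ} (hf : ‖f‖ = 1) {α : ℝ} (hα : 0 < α) :
    ∃ p, (closedBall (0 : X) 1 ∩ coordNbhd c p).Nonempty ∧
      closedBall (0 : X) 1 ∩ coordNbhd c p ⊆ unitBallSlice f α := by
  obtain ⟨ε, hε, rfl⟩ : ∃ ε, 0 < ε ∧ α = 6 * ε := ⟨α / 6, by positivity, by ring⟩
  obtain ⟨x, hx, hfx⟩ := f.exists_norm_le_one_lt_apply (r := 1 - ε) (by rw [hf]; linarith)
  obtain ⟨n, hn⟩ := ((tendsto_partialSum e c hbasis x).eventually (ball_mem_nhds x hε)).exists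
  rw [dist_eq_norm] at hn
  set S := ∑ j ∈ range n, ‖e j‖
  obtain ⟨r, hr0, hr⟩ := exists_rat_btwn (show (0 : ℝ) < ε / (2 * (S + 1)) by positivity)
  choose q hq using fun j : Fin n => exists_rat_near (c j x) hr0
  refine ⟨(⟨n, q⟩, r), ⟨x, mem_closedBall_zero_iff.2 hx, hq⟩, ?_⟩
  rintro y ⟨hy, hyq⟩
  refine ⟨hy, ?_⟩
  have hcoord : ∀ j < n, |c j y - c j x| ≤ 2 * r := fun j hj => by
    have := abs_sub_le (c j y) (q ⟨j, hj⟩) (c j x)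
    rw [abs_sub_comm (q ⟨j, hj⟩ : ℝ)] at this
    linarith [hyq ⟨j, hj⟩, hq ⟨j, hj⟩]
  have hPyx : ‖partialSum e c n y - partialSum e c n x‖ ≤ ε := by
    refine (norm_partialSum_sub_partialSum_le e c hcoord).trans ?_
    rw [lt_div_iff₀ (by positivity)] at hr
    nlinarith [sum_nonneg fun j (_ : j ∈ range n) => norm_nonneg (e j)]
  have h1 := abs_le.1 (f.abs_apply_sub_apply_le hf.le (partialSum e c n x) x)
  have h2 := abs_le.1 (f.abs_apply_sub_apply_le hf.le (partialSum e c n y) (partialSum e c n x))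
  have h3 := two_mul_apply_partialSum_sub_one_le e c hbasis huncond hf.le n
    (mem_closedBall_zero_iff.1 hy)
  linarith [h1.1, h2.1]

end SchauderBasis

end

theorem stmt3_general {X : Type*} [NormedAddCommGroup X] [NormedSpace ℝ X]
    (e : ℕ → X) (c : ℕ → X →L[ℝ] ℝ)
    (hbasis : ∀ x : X, HasSum (fun n => c n x • e n) x)
    (huncond : ∀ (x y : X) (θ : ℕ → ℝ), (∀ n, |θ n| = 1) →
      HasSum (fun n => θ n • c n x • e n) y → ‖y‖ = ‖x‖) :
    ∃ V : ℕ → Set X,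
      (∀ n, (V n).Nonempty ∧
        ∃ U : Set (WeakSpace ℝ X), IsOpen U ∧
          V n = closedBall (0 : X) 1 ∩ (toWeakSpace ℝ X ⁻¹' U)) ∧
      (∀ (f : X →L[ℝ] ℝ), ‖f‖ = 1 → ∀ α : ℝ, 0 < α →
        ∃ n, V n ⊆ {x ∈ closedBall (0 : X) 1 | 1 - α < f x}) := by
  refine exists_seq_nonempty_subset_unitBallSlice_of_countable
    (fun p => toWeakSpace ℝ X '' SchauderBasis.coordNbhd c p)
    (fun p => isOpen_toWeakSpace_image_setOf_forall_abs_sub_lt _ _ _) fun f hf α hα => ?_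
  simpa only [(toWeakSpace ℝ X).injective.preimage_image] using
    SchauderBasis.exists_coordNbhd_subset_unitBallSlice e c hbasis huncond hf hα

/-- Let `X` be a Banach space with a 1-unconditional Schauder basis
`(e_n)` (with biorthogonal coordinate functionals `c_n`). Then the closed unit ball
`B_X` is a slicely countably determined (SCD) set: there exists a countable family of
nonempty relatively weakly open subsets `{V_n}` of `B_X` such that every slice of
`B_X` contains some `V_n`. -/
theorem stmt3 {X : Type*} [NormedAddCommGroup X] [NormedSpace ℝ X] [CompleteSpace X]
    (e : ℕ → X) (c : ℕ → X →L[ℝ] ℝ)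
    (hbi : ∀ n m : ℕ, c n (e m) = if n = m then 1 else 0)
    (hbasis : ∀ x : X, HasSum (fun n => c n x • e n) x)
    (huncond : ∀ (x y : X) (θ : ℕ → ℝ), (∀ n, |θ n| = 1) →
      HasSum (fun n => θ n • c n x • e n) y → ‖y‖ = ‖x‖) :
    ∃ V : ℕ → Set X,
      (∀ n, (V n).Nonempty ∧
        ∃ U : Set (WeakSpace ℝ X), IsOpen U ∧
          V n = closedBall (0 : X) 1 ∩ (toWeakSpace ℝ X ⁻¹' U)) ∧
      (∀ (f : X →L[ℝ] ℝ), ‖f‖ = 1 → ∀ α : ℝ, 0 < α →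
        ∃ n, V n ⊆ {x ∈ closedBall (0 : X) 1 | 1 - α < f x}) :=
  stmt3_general e c hbasis huncond
end

section
/- Let X be a rearrangement invariant sequence space with the alternative Daugavet property, and let E be the closed linear span of the canonical basis vectors. Then E also has the alternative Daugavet property: for every x ∈ S_E, f ∈ S_{E*}, ε > 0 there exists y ∈ B_E with |f(y)| > 1 − ε and max_{|θ|=1} ‖θx + y‖ > 2 − ε. -/
/-!
Truncations `S_n z = ∑_{k<n} z_k e_k` are contractions by solidity, and they converge to `z` on the
closed span `E` of the `e_k` because they eventually fix every finitely supported vector. A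
functional `f` on `E` has coefficients `c_k = f(e_k)` with `∑ |z_k c_k| ≤ ‖f‖ ‖z‖` for every
`z ∈ X` (test `f` on sign-changed truncations), so `F z = ∑ z_k c_k = lim f(S_n z)` extends `f` to
`X` with the same norm. The ADP of `X` applied to `x` and `F` gives `y`, and since
`‖x ± S_n y‖ → ‖x ± y‖` by the r.i. limit property, a long enough truncation `S_n y ∈ E` works.
-/

open Filter Topology Finset

section SolidSequenceSpace

variable {X : Type*} [NormedAddCommGroup X] [NormedSpace ℝ X]

noncomputable def partialSum (eX : ℕ → X) (n : ℕ) : (ℕ → ℝ) →ₗ[ℝ] X :=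
  ∑ k ∈ range n, (LinearMap.proj k).smulRight (eX k)

variable {ι : X →ₗ[ℝ] ℕ → ℝ} (eX : ℕ → X)

theorem partialSum_apply (n : ℕ) (σ : ℕ → ℝ) :
    partialSum eX n σ = ∑ k ∈ range n, σ k • eX k := by
  simp [partialSum]

theorem partialSum_mem_span (n : ℕ) (σ : ℕ → ℝ) :
    partialSum eX n σ ∈ Submodule.span ℝ (Set.range eX) := by
  rw [partialSum_apply]
  exact Submodule.sum_mem _ fun k _ => Submodule.smul_mem _ _ (Submodule.subset_span ⟨k, rfl⟩)

theorem partialSum_mem_closure (n : ℕ) (σ : ℕ → ℝ) :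
    partialSum eX n σ ∈ (Submodule.span ℝ (Set.range eX)).topologicalClosure :=
  Submodule.le_topologicalClosure _ (partialSum_mem_span eX n σ)

variable {eX}

theorem coord_partialSum (heX : ∀ n, ι (eX n) = Pi.single n 1) (n : ℕ) (σ : ℕ → ℝ) (j : ℕ) :
    ι (partialSum eX n σ) j = if j < n then σ j else 0 := by
  simp [partialSum_apply, heX, Pi.single_apply, Finset.sum_ite_eq]

theorem norm_partialSum_le (hsolid : ∀ x y : X, (∀ n, |ι x n| ≤ |ι y n|) → ‖x‖ ≤ ‖y‖)
    (heX : ∀ n, ι (eX n) = Pi.single n 1) {σ : ℕ → ℝ} {z : X} (h : ∀ j, |σ j| ≤ |ι z j|)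
    (n : ℕ) : ‖partialSum eX n σ‖ ≤ ‖z‖ :=
  hsolid _ _ fun j => by
    rw [coord_partialSum heX]
    split_ifs
    exacts [h j, by simp]

theorem eventually_coord_eq_zero_of_mem_span (heX : ∀ n, ι (eX n) = Pi.single n 1) {w : X}
    (hw : w ∈ Submodule.span ℝ (Set.range eX)) : ∀ᶠ j in atTop, ι w j = 0 := by
  induction hw using Submodule.span_induction with
  | mem w hw =>
    obtain ⟨k, rfl⟩ := hw
    filter_upwards [eventually_gt_atTop k] with j hj
    simp [heX, hj.ne']
  | zero => simp
  | add a b _ _ ha hb => filter_upwards [ha, hb] with j ha hb; simp [ha, hb]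
  | smul c a _ ha => filter_upwards [ha] with j ha; simp [ha]

theorem eventually_partialSum_eq_of_mem_span (hinj : Function.Injective ι)
    (heX : ∀ n, ι (eX n) = Pi.single n 1) {w : X}
    (hw : w ∈ Submodule.span ℝ (Set.range eX)) :
    ∀ᶠ n in atTop, partialSum eX n (ι w) = w := by
  obtain ⟨N, hN⟩ := eventually_atTop.mp (eventually_coord_eq_zero_of_mem_span heX hw)
  filter_upwards [eventually_ge_atTop N] with n hn
  refine hinj (funext fun j => ?_)
  rw [coord_partialSum heX]
  split_ifs with hj
  · rfl
  · exact (hN j (by omega)).symm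

theorem tendsto_partialSum_of_mem_closure (hinj : Function.Injective ι)
    (hsolid : ∀ x y : X, (∀ n, |ι x n| ≤ |ι y n|) → ‖x‖ ≤ ‖y‖)
    (heX : ∀ n, ι (eX n) = Pi.single n 1) {z : X}
    (hz : z ∈ (Submodule.span ℝ (Set.range eX)).topologicalClosure) :
    Tendsto (fun n => partialSum eX n (ι z)) atTop (𝓝 z) := by
  have hequi : Equicontinuous fun n (z : X) => partialSum eX n (ι z) :=
    Metric.equicontinuous_of_continuity_modulus id tendsto_id _ fun a b n => by
      simpa [dist_eq_norm, ← map_sub] using norm_partialSum_le hsolid heX (fun j => le_rfl) n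
  have hclosed := hequi.isClosed_setOfPred_tendsto (l := atTop) continuous_id
  refine closure_minimal (fun w hw => ?_) hclosed hz
  exact tendsto_const_nhds.congr'
    (EventuallyEq.symm (eventually_partialSum_eq_of_mem_span hinj heX hw))

variable (eX) in
noncomputable def coeff (f : (Submodule.span ℝ (Set.range eX)).topologicalClosure →L[ℝ] ℝ)
    (k : ℕ) : ℝ :=
  f ⟨eX k, Submodule.le_topologicalClosure _ (Submodule.subset_span ⟨k, rfl⟩)⟩

theorem apply_partialSum_eq_sum_coeff
    (f : (Submodule.span ℝ (Set.range eX)).topologicalClosure →L[ℝ] ℝ) (n : ℕ) (σ : ℕ → ℝ) :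
    f ⟨partialSum eX n σ, partialSum_mem_closure eX n σ⟩ = ∑ k ∈ range n, σ k * coeff eX f k := by
  have : (⟨partialSum eX n σ, partialSum_mem_closure eX n σ⟩ :
      (Submodule.span ℝ (Set.range eX)).topologicalClosure) =
      ∑ k ∈ range n,
        σ k • ⟨eX k, Submodule.le_topologicalClosure _ (Submodule.subset_span ⟨k, rfl⟩)⟩ :=
    Subtype.ext (by simp [partialSum_apply])
  rw [this, map_sum]
  simp only [map_smul, smul_eq_mul, coeff]

theorem sum_abs_mul_coeff_le (hsolid : ∀ x y : X, (∀ n, |ι x n| ≤ |ι y n|) → ‖x‖ ≤ ‖y‖)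
    (heX : ∀ n, ι (eX n) = Pi.single n 1)
    (f : (Submodule.span ℝ (Set.range eX)).topologicalClosure →L[ℝ] ℝ) (z : X) (n : ℕ) :
    ∑ k ∈ range n, |ι z k * coeff eX f k| ≤ ‖f‖ * ‖z‖ := by
  set σ : ℕ → ℝ := fun k => if 0 ≤ ι z k * coeff eX f k then ι z k else -ι z k
  have hσ : ∀ j, |σ j| ≤ |ι z j| := fun j => by
    simp only [σ]; split_ifs <;> simp
  have hσc : ∀ k, σ k * coeff eX f k = |ι z k * coeff eX f k| := fun k => by
    simp only [σ]; split_ifs with h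
    · exact (abs_of_nonneg h).symm
    · rw [abs_of_neg (not_le.mp h), neg_mul]
  calc ∑ k ∈ range n, |ι z k * coeff eX f k|
      = f ⟨partialSum eX n σ, partialSum_mem_closure eX n σ⟩ := by
        simp only [apply_partialSum_eq_sum_coeff, hσc]
    _ ≤ ‖f‖ * ‖partialSum eX n σ‖ := (le_abs_self _).trans (f.le_opNorm _)
    _ ≤ ‖f‖ * ‖z‖ := by gcongr; exact norm_partialSum_le hsolid heX hσ n

theorem summable_abs_mul_coeff (hsolid : ∀ x y : X, (∀ n, |ι x n| ≤ |ι y n|) → ‖x‖ ≤ ‖y‖)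
    (heX : ∀ n, ι (eX n) = Pi.single n 1)
    (f : (Submodule.span ℝ (Set.range eX)).topologicalClosure →L[ℝ] ℝ) (z : X) :
    Summable fun k => |ι z k * coeff eX f k| :=
  summable_of_sum_range_le (fun _ => abs_nonneg _) (sum_abs_mul_coeff_le hsolid heX f z)

theorem exists_norm_eq_tendsto_apply_partialSum (hinj : Function.Injective ι)
    (hsolid : ∀ x y : X, (∀ n, |ι x n| ≤ |ι y n|) → ‖x‖ ≤ ‖y‖)
    (heX : ∀ n, ι (eX n) = Pi.single n 1)
    (f : (Submodule.span ℝ (Set.range eX)).topologicalClosure →L[ℝ] ℝ) :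
    ∃ F : X →L[ℝ] ℝ, ‖F‖ = ‖f‖ ∧ ∀ z : X,
      Tendsto (fun n => f ⟨partialSum eX n (ι z), partialSum_mem_closure eX n (ι z)⟩) atTop
        (𝓝 (F z)) := by
  have hsum z := (summable_abs_mul_coeff hsolid heX f z).of_abs
  let F₀ : X →ₗ[ℝ] ℝ :=
    { toFun := fun z => ∑' k, ι z k * coeff eX f k
      map_add' := fun z w => by
        simp only [map_add, Pi.add_apply, add_mul]
        exact (hsum z).tsum_add (hsum w)
      map_smul' := fun r z => by
        simp only [map_smul, Pi.smul_apply, smul_eq_mul, RingHom.id_apply, mul_assoc]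
        exact tsum_mul_left }
  have hbound z : ‖F₀ z‖ ≤ ‖f‖ * ‖z‖ := calc
    ‖F₀ z‖ ≤ ∑' k, |ι z k * coeff eX f k| :=
      norm_tsum_le_tsum_norm (summable_abs_mul_coeff hsolid heX f z)
    _ ≤ ‖f‖ * ‖z‖ :=
      Real.tsum_le_of_sum_range_le (fun _ => abs_nonneg _) (sum_abs_mul_coeff_le hsolid heX f z)
  let F := F₀.mkContinuous ‖f‖ hbound
  have hF z : Tendsto (fun n => f ⟨partialSum eX n (ι z), partialSum_mem_closure eX n (ι z)⟩)
      atTop (𝓝 (F z)) := by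
    simp only [apply_partialSum_eq_sum_coeff]
    exact (hsum z).hasSum.tendsto_sum_nat
  have hext (z : (Submodule.span ℝ (Set.range eX)).topologicalClosure) : F z = f z :=
    tendsto_nhds_unique (hF z) <| (f.continuous.tendsto z).comp <|
      tendsto_subtype_rng.mpr (tendsto_partialSum_of_mem_closure hinj hsolid heX z.2)
  refine ⟨F, le_antisymm (F₀.mkContinuous_norm_le (norm_nonneg f) hbound) ?_, hF⟩
  exact f.opNorm_le_bound (norm_nonneg F) fun z => hext z ▸ F.le_opNorm z

theorem tendsto_norm_add_partialSum (hinj : Function.Injective ι)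
    (hsolid : ∀ x y : X, (∀ n, |ι x n| ≤ |ι y n|) → ‖x‖ ≤ ‖y‖)
    (heX : ∀ n, ι (eX n) = Pi.single n 1)
    (hlim : ∀ x : X, Tendsto (fun n => ‖∑ k ∈ Finset.range n, ι x k • eX k‖)
      atTop (nhds ‖x‖))
    {x : X} (hx : x ∈ (Submodule.span ℝ (Set.range eX)).topologicalClosure) (y : X) :
    Tendsto (fun n => ‖x + partialSum eX n (ι y)‖) atTop (𝓝 ‖x + y‖) := by
  have hxy : Tendsto (fun n => ‖partialSum eX n (ι (x + y))‖) atTop (𝓝 ‖x + y‖) := by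
    simpa only [partialSum_apply] using hlim (x + y)
  have hdist : Tendsto (fun n => ‖partialSum eX n (ι x) - x‖) atTop (𝓝 0) :=
    tendsto_iff_norm_sub_tendsto_zero.mp (tendsto_partialSum_of_mem_closure hinj hsolid heX hx)
  refine tendsto_of_tendsto_of_dist hxy (squeeze_zero (fun _ => dist_nonneg) (fun n => ?_) hdist)
  calc dist ‖partialSum eX n (ι (x + y))‖ ‖x + partialSum eX n (ι y)‖
      ≤ ‖partialSum eX n (ι (x + y)) - (x + partialSum eX n (ι y))‖ := abs_norm_sub_norm_le _ _
    _ = ‖partialSum eX n (ι x) - x‖ := by rw [map_add, map_add]; abel_nf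

end SolidSequenceSpace

theorem stmt8_general {X : Type*} [NormedAddCommGroup X] [NormedSpace ℝ X]
    (ι : X →ₗ[ℝ] ℕ → ℝ) (hinj : Function.Injective ι)
    (hsolid : ∀ x y : X, (∀ n, |ι x n| ≤ |ι y n|) → ‖x‖ ≤ ‖y‖)
    (eX : ℕ → X) (heX : ∀ n, ι (eX n) = Pi.single n 1)
    (hlim : ∀ x : X, Tendsto (fun n => ‖∑ k ∈ Finset.range n, ι x k • eX k‖)
      atTop (nhds ‖x‖))
    (hADP : ∀ x : X, ‖x‖ = 1 → ∀ f : X →L[ℝ] ℝ, ‖f‖ = 1 → ∀ ε : ℝ, 0 < ε →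
      ∃ y : X, ‖y‖ = 1 ∧ f y > 1 - ε ∧ max ‖x + y‖ ‖x - y‖ > 2 - ε) :
    ∀ x : (Submodule.span ℝ (Set.range eX)).topologicalClosure, ‖x‖ = 1 →
      ∀ f : (Submodule.span ℝ (Set.range eX)).topologicalClosure →L[ℝ] ℝ, ‖f‖ = 1 →
        ∀ ε : ℝ, 0 < ε →
          ∃ y : (Submodule.span ℝ (Set.range eX)).topologicalClosure,
            ‖y‖ ≤ 1 ∧ |f y| > 1 - ε ∧
              max ‖(x : X) + (y : X)‖ ‖(x : X) - (y : X)‖ > 2 - ε := by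
  intro x hx f hf ε hε
  obtain ⟨F, hFnorm, hFf⟩ := exists_norm_eq_tendsto_apply_partialSum hinj hsolid heX f
  obtain ⟨y, hy, hFy, hmax⟩ := hADP x hx F (hFnorm.trans hf) ε hε
  have hnorm : Tendsto (fun n => max ‖(x : X) + partialSum eX n (ι y)‖
      ‖(x : X) - partialSum eX n (ι y)‖) atTop (𝓝 (max ‖(x : X) + y‖ ‖(x : X) - y‖)) := by
    refine (tendsto_norm_add_partialSum hinj hsolid heX hlim x.2 y).max ?_
    simpa [sub_eq_add_neg] using tendsto_norm_add_partialSum hinj hsolid heX hlim x.2 (-y)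
  obtain ⟨n, hfn, hmaxn⟩ :=
    ((hFf y).eventually_const_lt hFy |>.and (hnorm.eventually_const_lt hmax)).exists
  refine ⟨⟨partialSum eX n (ι y), partialSum_mem_closure eX n (ι y)⟩, ?_, ?_, hmaxn⟩
  · exact hy ▸ norm_partialSum_le hsolid heX (fun _ => le_rfl) n
  · exact hfn.trans_le (le_abs_self _)

/-- Let `X` be a rearrangement invariant sequence space (encoded as a
Banach space with a solid linear injection `ι` into the sequences, canonical vectors
`eX`, and the r.i. property `‖x‖ = lim_n ‖Σ_{k<n} x_k e_k‖`) with the alternative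
Daugavet property, and let `E` be the closed linear span of the canonical basis
vectors. Then `E` also has the alternative Daugavet property: for every `x ∈ S_E`,
`f ∈ S_{E*}`, `ε > 0` there exists `y ∈ B_E` with `|f(y)| > 1 − ε` and
`max_{|θ|=1} ‖θx + y‖ > 2 − ε`. -/
theorem stmt8 {X : Type*} [NormedAddCommGroup X] [NormedSpace ℝ X] [CompleteSpace X]
    (ι : X →ₗ[ℝ] ℕ → ℝ) (hinj : Function.Injective ι)
    (hsolid : ∀ x y : X, (∀ n, |ι x n| ≤ |ι y n|) → ‖x‖ ≤ ‖y‖)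
    (eX : ℕ → X) (heX : ∀ n, ι (eX n) = Pi.single n 1)
    (hlim : ∀ x : X, Tendsto (fun n => ‖∑ k ∈ Finset.range n, ι x k • eX k‖)
      atTop (nhds ‖x‖))
    (hADP : ∀ x : X, ‖x‖ = 1 → ∀ f : X →L[ℝ] ℝ, ‖f‖ = 1 → ∀ ε : ℝ, 0 < ε →
      ∃ y : X, ‖y‖ = 1 ∧ f y > 1 - ε ∧ max ‖x + y‖ ‖x - y‖ > 2 - ε) :
    ∀ x : (Submodule.span ℝ (Set.range eX)).topologicalClosure, ‖x‖ = 1 →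
      ∀ f : (Submodule.span ℝ (Set.range eX)).topologicalClosure →L[ℝ] ℝ, ‖f‖ = 1 →
        ∀ ε : ℝ, 0 < ε →
          ∃ y : (Submodule.span ℝ (Set.range eX)).topologicalClosure,
            ‖y‖ ≤ 1 ∧ |f y| > 1 - ε ∧
              max ‖(x : X) + (y : X)‖ ‖(x : X) - (y : X)‖ > 2 - ε :=
  stmt8_general ι hinj hsolid eX heX hlim hADP
end

section
/- For α ∈ (0,1), the space X_α = (L_1[0,1], p_α) with p_α(f) = (1/α)·sup{∫_A |f| dμ : μ(A) ≤ α} contains a subspace isometric to ℓ_∞^m, where m = ⌊1/α⌋; namely the span of χ_{[0,α]}, χ_{[α,2α]}, …, χ_{[(m−1)α, mα]} with p_α(Σ_{k=1}^m a_k χ_{[(k−1)α,kα]}) = max_k |a_k|. Consequently the Banach–Mazur distance d(X_α, L_1[0,1]) → ∞ as α → 0. -/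
open MeasureTheory Set Filter

noncomputable section

/-- Lebesgue measure on `[0,1]`. -/
def mu01 : Measure ℝ := MeasureTheory.volume.restrict (Set.Icc (0 : ℝ) 1)

/-- The norm `p_α(f) = (1/α)·sup{∫_A |f| dμ : A measurable, μ(A) ≤ α}` on `L_1[0,1]`. -/
def palpha (α : ℝ) (f : ℝ → ℝ) : ℝ :=
  α⁻¹ * sSup {r : ℝ | ∃ A : Set ℝ, MeasurableSet A ∧ mu01 A ≤ ENNReal.ofReal α ∧
    r = ∫ t in A, |f t| ∂mu01}

/-!
On the span of the blocks `χ_[kα,(k+1)α]`, which are a.e. disjoint sets of measure `α` in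
`[0,1]`, `|f| ≤ max |a_k|` a.e., so `p_α(f) ≤ max |a_k|`, with equality on the block where
`|a_k|` is maximal.

For the distance: if `T : X_β → L_1` has `‖T‖ ≤ c₁` and `‖T⁻¹‖ ≤ c₂`, the images `y_k` of the
`m = ⌊1/β⌋` unit blocks satisfy `∫ |y_k| ≥ 1/c₂`, while every signed sum `∑ ε_k y_k` is the
image of a vector of `ℓ_∞^m`-norm one, so has `L_1`-norm at most `c₁`. Khintchine's inequality
in `L_1` (constant `√3`, obtained by interpolating the second moment of a Rademacher sum between
the first and the fourth) and Cauchy–Schwarz give pointwise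
`∑_k |y_k| ≤ √(3m) · avg_ε |∑ ε_k y_k|`. Integrating, `m / c₂ ≤ √(3m) c₁`, i.e.
`m ≤ 3 (c₁ c₂)²`.
-/

open Finset Function

instance : IsFiniteMeasure mu01 := by unfold mu01; infer_instance

instance : NullSingletonClass mu01 := by unfold mu01; infer_instance

theorem sum_sq_pow_three_le {κ : Type*} (s : Finset κ) (r : κ → ℝ) :
    (∑ i ∈ s, r i ^ 2) ^ 3 ≤ (∑ i ∈ s, |r i|) ^ 2 * ∑ i ∈ s, r i ^ 4 := by
  have h13 := sum_mul_sq_le_sq_mul_sq s (fun i => √|r i|) (fun i => √|r i| * |r i|)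
  have h34 := sum_mul_sq_le_sq_mul_sq s (fun i => |r i|) (fun i => r i ^ 2)
  have e1 (i : κ) : √|r i| * (√|r i| * |r i|) = r i ^ 2 := by
    rw [← mul_assoc, Real.mul_self_sqrt (abs_nonneg _), ← sq, sq_abs]
  have e2 (i : κ) : (√|r i| * |r i|) ^ 2 = |r i| ^ 3 := by
    rw [mul_pow, Real.sq_sqrt (abs_nonneg _)]; ring
  have e3 (i : κ) : |r i| * r i ^ 2 = |r i| ^ 3 := by rw [← sq_abs]; ring
  simp only [e1, e2, e3, Real.sq_sqrt (abs_nonneg _), sq_abs, ← pow_mul] at h13 h34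
  set Q2 := ∑ i ∈ s, r i ^ 2
  set A := ∑ i ∈ s, |r i|
  set B3 := ∑ i ∈ s, |r i| ^ 3
  have hQ2 : 0 ≤ Q2 := sum_nonneg fun i _ => sq_nonneg _
  rcases hQ2.eq_or_lt with h0 | hpos
  · rw [← h0, zero_pow three_ne_zero]; positivity
  · have : Q2 ^ 4 ≤ Q2 * (A ^ 2 * ∑ i ∈ s, r i ^ 4) := by
      calc Q2 ^ 4 = (Q2 ^ 2) ^ 2 := by ring
        _ ≤ (A * B3) ^ 2 := pow_le_pow_left₀ (sq_nonneg _) h13 2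
        _ = A ^ 2 * B3 ^ 2 := by ring
        _ ≤ A ^ 2 * (Q2 * ∑ i ∈ s, r i ^ 4) := by gcongr
        _ = Q2 * (A ^ 2 * ∑ i ∈ s, r i ^ 4) := by ring
    rw [pow_succ' Q2 3] at this
    exact le_of_mul_le_mul_left this hpos

section SignSums

variable {ι : Type*} [DecidableEq ι]

/-- A sign vector in `{±1}^ι` is encoded by the finset where it is `+1`, so averaging over
signs becomes a sum over a powerset. -/
def signVec (K : Finset ι) (k : ι) : ℝ := if k ∈ K then 1 else -1

lemma abs_signVec (K : Finset ι) (k : ι) : |signVec K k| = 1 := by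
  unfold signVec; split_ifs <;> simp

def signSum (x : ι → ℝ) (S K : Finset ι) : ℝ := ∑ k ∈ S, signVec K k * x k

lemma sum_powerset_insert_signSum {x : ι → ℝ} {S : Finset ι} {a : ι} (ha : a ∉ S)
    (f : ℝ → ℝ) :
    ∑ K ∈ (insert a S).powerset, f (signSum x (insert a S) K) =
      ∑ K ∈ S.powerset, (f (signSum x S K - x a) + f (signSum x S K + x a)) := by
  rw [sum_powerset_insert ha, ← sum_add_distrib]
  refine sum_congr rfl fun K hK => ?_
  have haK : a ∉ K := fun h => ha (mem_powerset.1 hK h)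
  have hS : ∀ L, signSum x S (insert a L) = signSum x S L := fun L =>
    sum_congr rfl fun k hk => by
      simp [signVec, show k ≠ a from fun h => ha (h ▸ hk)]
  simp only [signSum, sum_insert ha] at hS ⊢
  rw [hS, signVec, signVec, if_neg haK, if_pos (mem_insert_self a K)]
  congr 1 <;> congr 1 <;> ring

theorem sum_powerset_signSum_sq (x : ι → ℝ) (S : Finset ι) :
    ∑ K ∈ S.powerset, signSum x S K ^ 2 = 2 ^ #S * ∑ k ∈ S, x k ^ 2 := by
  induction S using Finset.induction_on with
  | empty => simp [signSum]
  | @insert a S ha ih =>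
    rw [sum_powerset_insert_signSum ha (· ^ 2), card_insert_of_notMem ha, sum_insert ha]
    have h (r : ℝ) : (r - x a) ^ 2 + (r + x a) ^ 2 = 2 * r ^ 2 + 2 * x a ^ 2 := by ring
    simp only [h, sum_add_distrib, ← mul_sum, ih, sum_const, card_powerset, nsmul_eq_mul]
    push_cast; ring

theorem sum_powerset_signSum_pow_four_le (x : ι → ℝ) (S : Finset ι) :
    ∑ K ∈ S.powerset, signSum x S K ^ 4 ≤ 3 * 2 ^ #S * (∑ k ∈ S, x k ^ 2) ^ 2 := by
  induction S using Finset.induction_on with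
  | empty => simp [signSum]
  | @insert a S ha ih =>
    rw [sum_powerset_insert_signSum ha (· ^ 4), card_insert_of_notMem ha, sum_insert ha]
    have h (r : ℝ) : (r - x a) ^ 4 + (r + x a) ^ 4 =
        2 * r ^ 4 + 12 * x a ^ 2 * r ^ 2 + 2 * x a ^ 4 := by ring
    simp only [h, sum_add_distrib, ← mul_sum, sum_powerset_signSum_sq, sum_const, card_powerset,
      nsmul_eq_mul]
    have hQ : 0 ≤ ∑ k ∈ S, x k ^ 2 := sum_nonneg fun k _ => sq_nonneg _
    have h2 : (0 : ℝ) < 2 ^ #S := by positivity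
    push_cast
    rw [pow_succ (2 : ℝ)]
    nlinarith [mul_nonneg h2.le (sq_nonneg (x a ^ 2)),
      mul_nonneg (mul_nonneg h2.le (sq_nonneg (x a))) hQ]

theorem khintchine_inequality (x : ι → ℝ) (S : Finset ι) :
    (2 ^ #S) ^ 2 * ∑ k ∈ S, x k ^ 2 ≤ 3 * (∑ K ∈ S.powerset, |signSum x S K|) ^ 2 := by
  have hmom := sum_sq_pow_three_le S.powerset (signSum x S)
  rw [sum_powerset_signSum_sq] at hmom
  have h4 := sum_powerset_signSum_pow_four_le x S
  set N : ℝ := 2 ^ #S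
  set Q := ∑ k ∈ S, x k ^ 2
  set A := ∑ K ∈ S.powerset, |signSum x S K|
  have hQ : 0 ≤ Q := sum_nonneg fun k _ => sq_nonneg _
  rcases hQ.eq_or_lt with h0 | hpos
  · rw [← h0, mul_zero]; positivity
  · have : N * Q ^ 2 * (N ^ 2 * Q) ≤ N * Q ^ 2 * (3 * A ^ 2) := by
      calc N * Q ^ 2 * (N ^ 2 * Q) = (N * Q) ^ 3 := by ring
        _ ≤ A ^ 2 * (3 * N * Q ^ 2) := hmom.trans (by gcongr)
        _ = N * Q ^ 2 * (3 * A ^ 2) := by ring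
    exact le_of_mul_le_mul_left this (by positivity)

theorem pow_card_mul_sum_abs_le [Fintype ι] (x : ι → ℝ) :
    2 ^ Fintype.card ι * ∑ k, |x k| ≤
      √(3 * Fintype.card ι) * ∑ K : Finset ι, |signSum x univ K| := by
  have hcs : (∑ k, |x k|) ^ 2 ≤ Fintype.card ι * ∑ k, x k ^ 2 := by
    simpa only [sq_abs, card_univ] using
      sq_sum_le_card_mul_sum_sq (s := univ) (f := fun k => |x k|)
  have hk := khintchine_inequality x univ
  rw [Finset.powerset_univ, card_univ] at hk
  rw [← Real.sqrt_sq (by positivity : (0 : ℝ) ≤ ∑ K : Finset ι, |signSum x univ K|),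
    ← Real.sqrt_mul (by positivity)]
  apply Real.le_sqrt_of_sq_le
  calc (2 ^ Fintype.card ι * ∑ k, |x k|) ^ 2
      ≤ (2 ^ Fintype.card ι) ^ 2 * (Fintype.card ι * ∑ k, x k ^ 2) := by
        rw [mul_pow]; gcongr
    _ ≤ 3 * Fintype.card ι * (∑ K : Finset ι, |signSum x univ K|) ^ 2 := by
        nlinarith [Nat.cast_nonneg (α := ℝ) (Fintype.card ι)]

end SignSums

theorem card_le_of_unit_lower_of_sign_upper {ι Ω : Type*} [Fintype ι] [DecidableEq ι]
    [MeasurableSpace Ω] {μ : Measure Ω} (Φ : (ι → ℝ) →ₗ[ℝ] Ω → ℝ)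
    (hΦ : ∀ a, Integrable (Φ a) μ) {c₁ c₂ : ℝ} (hc₂ : 0 ≤ c₂)
    (hunit : ∀ k, 1 ≤ c₂ * ∫ t, |Φ (Pi.single k 1) t| ∂μ)
    (hsign : ∀ ε : ι → ℝ, (∀ k, |ε k| = 1) → ∫ t, |Φ ε t| ∂μ ≤ c₁) :
    (Fintype.card ι : ℝ) ≤ 3 * (c₁ * c₂) ^ 2 := by
  set n := Fintype.card ι
  set y : ι → Ω → ℝ := fun k => Φ (Pi.single k 1)
  have hΦy (a : ι → ℝ) (t : Ω) : Φ a t = ∑ k, a k * y k t := by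
    conv_lhs => rw [pi_eq_sum_univ' a]
    simp [y, map_sum, map_smul]
  have hpoint (t : Ω) :
      2 ^ n * ∑ k, |y k t| ≤ √(3 * n) * ∑ K : Finset ι, |Φ (signVec K) t| := by
    simpa only [hΦy, signSum] using pow_card_mul_sum_abs_le (fun k => y k t)
  have hintegrated :
      2 ^ n * ∑ k, ∫ t, |y k t| ∂μ ≤ √(3 * n) * ∑ K : Finset ι, ∫ t, |Φ (signVec K) t| ∂μ := by
    rw [← integral_finsetSum _ fun k _ => (hΦ _).abs,
      ← integral_finsetSum _ fun K _ => (hΦ _).abs, ← integral_const_mul, ← integral_const_mul]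
    exact integral_mono ((integrable_finsetSum _ fun k _ => (hΦ _).abs).const_mul _)
      ((integrable_finsetSum _ fun K _ => (hΦ _).abs).const_mul _) hpoint
  have hsigns : ∑ K : Finset ι, ∫ t, |Φ (signVec K) t| ∂μ ≤ 2 ^ n * c₁ := by
    calc ∑ K : Finset ι, ∫ t, |Φ (signVec K) t| ∂μ ≤ ∑ _K : Finset ι, c₁ :=
          sum_le_sum fun K _ => hsign _ (abs_signVec K)
      _ = 2 ^ n * c₁ := by simp [Fintype.card_finset, n]
  have hunits : (n : ℝ) ≤ c₂ * ∑ k, ∫ t, |y k t| ∂μ := by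
    simpa [mul_sum, n] using sum_le_sum fun k (_ : k ∈ Finset.univ) => hunit k
  have hn : (n : ℝ) ≤ √(3 * n) * (c₁ * c₂) := by
    have : ∑ k, ∫ t, |y k t| ∂μ ≤ √(3 * n) * c₁ := by
      refine le_of_mul_le_mul_left ?_ (by positivity : (0 : ℝ) < 2 ^ n)
      calc _ ≤ _ := hintegrated
        _ ≤ √(3 * n) * (2 ^ n * c₁) := by gcongr
        _ = 2 ^ n * (√(3 * n) * c₁) := by ring
    calc (n : ℝ) ≤ c₂ * ∑ k, ∫ t, |y k t| ∂μ := hunits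
      _ ≤ c₂ * (√(3 * n) * c₁) := by gcongr
      _ = √(3 * n) * (c₁ * c₂) := by ring
  have hsq : (n : ℝ) * n ≤ n * (3 * (c₁ * c₂) ^ 2) := by
    calc (n : ℝ) * n = (n : ℝ) ^ 2 := by ring
      _ ≤ (√(3 * n) * (c₁ * c₂)) ^ 2 := pow_le_pow_left₀ (by positivity) hn 2
      _ = n * (3 * (c₁ * c₂) ^ 2) := by rw [mul_pow, Real.sq_sqrt (by positivity)]; ring
  rcases (Nat.cast_nonneg (α := ℝ) n).eq_or_lt with h0 | hpos
  · rw [← h0]; positivity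
  · exact le_of_mul_le_mul_left hsq hpos

section StepFunctions

variable {ι : Type*} [Fintype ι] {I : ι → Set ℝ}

def stepMap (I : ι → Set ℝ) : (ι → ℝ) →ₗ[ℝ] ℝ → ℝ where
  toFun a t := ∑ k, (I k).indicator (fun _ => a k) t
  map_add' a b := by
    ext t
    simp only [Pi.add_apply, ← sum_add_distrib]
    exact sum_congr rfl fun k _ => by by_cases h : t ∈ I k <;> simp [h]
  map_smul' c a := by
    ext t
    simp only [Pi.smul_apply, smul_eq_mul, RingHom.id_apply, mul_sum]
    exact sum_congr rfl fun k _ => by by_cases h : t ∈ I k <;> simp [h]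

lemma stepMap_apply_of_mem (a : ι → ℝ) {t : ℝ} {k : ι} (hk : t ∈ I k)
    (hunique : ∀ j, t ∈ I j → j = k) : stepMap I a t = a k := by
  refine (sum_eq_single k (fun j _ hj => ?_) (by simp)).trans (Set.indicator_of_mem hk _)
  exact Set.indicator_of_notMem (fun h => hj (hunique j h)) _

lemma stepMap_apply_of_forall_notMem (a : ι → ℝ) {t : ℝ} (h : ∀ k, t ∉ I k) :
    stepMap I a t = 0 :=
  sum_eq_zero fun k _ => Set.indicator_of_notMem (h k) _

lemma ae_unique_mem {μ : Measure ℝ} (hI : Pairwise (AEDisjoint μ on I)) :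
    ∀ᵐ t ∂μ, ∀ j k, t ∈ I j → t ∈ I k → j = k := by
  simp only [ae_all_iff]
  intro j k
  by_cases hjk : j = k
  · exact ae_of_all _ fun _ _ _ => hjk
  · filter_upwards [measure_eq_zero_iff_ae_notMem.1 (hI hjk)] with t ht hj hk
    exact absurd ⟨hj, hk⟩ ht

lemma abs_stepMap_le_ae {μ : Measure ℝ} (hI : Pairwise (AEDisjoint μ on I)) (a : ι → ℝ) :
    ∀ᵐ t ∂μ, |stepMap I a t| ≤ ⨆ k, |a k| := by
  filter_upwards [ae_unique_mem hI] with t ht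
  by_cases h : ∃ k : ι, t ∈ I k
  · obtain ⟨k, hk⟩ := h
    rw [stepMap_apply_of_mem a hk fun j hj => ht j k hj hk]
    exact le_ciSup (Set.finite_range fun k => |a k|).bddAbove k
  · simp only [not_exists] at h
    rw [stepMap_apply_of_forall_notMem a h, abs_zero]
    exact Real.iSup_nonneg fun k => abs_nonneg _

lemma stepMap_ae_eq_restrict {μ : Measure ℝ} (hI : Pairwise (AEDisjoint μ on I))
    (hIm : ∀ k, MeasurableSet (I k)) (a : ι → ℝ) (k : ι) :
    ∀ᵐ t ∂μ.restrict (I k), stepMap I a t = a k := by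
  filter_upwards [ae_restrict_mem (hIm k), ae_restrict_of_ae (ae_unique_mem hI)] with t hk ht
  exact stepMap_apply_of_mem a hk fun j hj => ht j k hj hk

lemma integrable_stepMap {μ : Measure ℝ} [IsFiniteMeasure μ] (hIm : ∀ k, MeasurableSet (I k))
    (a : ι → ℝ) : Integrable (stepMap I a) μ :=
  integrable_finsetSum _ fun k _ => (integrable_const (a k)).indicator (hIm k)

theorem palpha_stepMap [Nonempty ι] {α : ℝ} (hα : 0 < α) (hIm : ∀ k, MeasurableSet (I k))
    (hIμ : ∀ k, mu01 (I k) = ENNReal.ofReal α) (hI : Pairwise (AEDisjoint mu01 on I))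
    (a : ι → ℝ) : palpha α (stepMap I a) = ⨆ k, |a k| := by
  set C := ⨆ k, |a k|
  obtain ⟨k₀, hk₀⟩ : ∃ k₀, |a k₀| = C := exists_eq_ciSup_of_finite
  have hC : 0 ≤ C := hk₀ ▸ abs_nonneg _
  have hupper {A : Set ℝ} (hA : mu01 A ≤ ENNReal.ofReal α) :
      ∫ t in A, |stepMap I a t| ∂mu01 ≤ α * C := by
    calc ∫ t in A, |stepMap I a t| ∂mu01 ≤ ∫ _ in A, C ∂mu01 :=
          integral_mono_ae (integrable_stepMap hIm a).abs.restrict (integrable_const C)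
            (ae_restrict_of_ae (abs_stepMap_le_ae hI a))
      _ = (mu01 A).toReal * C := by rw [setIntegral_const, smul_eq_mul, measureReal_def]
      _ ≤ α * C := by gcongr; exact ENNReal.toReal_le_of_le_ofReal hα.le hA
  have hattained : ∫ t in I k₀, |stepMap I a t| ∂mu01 = α * C := by
    rw [integral_congr_ae ((stepMap_ae_eq_restrict hI hIm a k₀).mono fun t ht => by rw [ht]),
      setIntegral_const, measureReal_def, hIμ, ENNReal.toReal_ofReal hα.le, hk₀, smul_eq_mul]
  have hsSup : IsGreatest {r : ℝ | ∃ A : Set ℝ, MeasurableSet A ∧ mu01 A ≤ ENNReal.ofReal α ∧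
      r = ∫ t in A, |stepMap I a t| ∂mu01} (α * C) :=
    ⟨⟨I k₀, hIm k₀, (hIμ k₀).le, hattained.symm⟩, by rintro _ ⟨A, -, hA, rfl⟩; exact hupper hA⟩
  rw [palpha, hsSup.csSup_eq, inv_mul_cancel_left₀ hα.ne']

end StepFunctions

def blocks (α : ℝ) (m : ℕ) (k : Fin m) : Set ℝ := Set.Icc (k * α) ((k + 1) * α)

lemma pairwise_aedisjoint_Icc_mul (μ : Measure ℝ) [NullSingletonClass μ] {α : ℝ} (hα : 0 ≤ α) :
    Pairwise (AEDisjoint μ on fun k : ℕ => Icc (k * α) ((k + 1) * α)) := by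
  refine (Std.Symm.pairwise_on _).2 fun j k hjk => ?_
  refine Set.Subsingleton.measure_zero (fun s hs t ht => ?_) μ
  have hjk' : ((j : ℝ) + 1) * α ≤ k * α := by gcongr; exact_mod_cast hjk
  have key {u : ℝ} (hu : u ∈ Icc (j * α) ((j + 1) * α) ∩ Icc (k * α) ((k + 1) * α)) :
      u = (j + 1) * α := le_antisymm hu.1.2 (hjk'.trans hu.2.1)
  rw [key hs, key ht]

lemma mu01_Icc_mul {α : ℝ} (hα : 0 ≤ α) {k : ℝ} (hk : 0 ≤ k) (hk1 : (k + 1) * α ≤ 1) :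
    mu01 (Icc (k * α) ((k + 1) * α)) = ENNReal.ofReal α := by
  rw [mu01, Measure.restrict_eq_self _ (Icc_subset_Icc (by positivity) hk1), Real.volume_Icc]
  ring_nf

theorem palpha_stepMap_blocks {α : ℝ} (hα : 0 < α) {m : ℕ} (hm0 : 0 < m) (hm : m * α ≤ 1)
    (a : Fin m → ℝ) : palpha α (stepMap (blocks α m) a) = ⨆ k, |a k| := by
  have : Nonempty (Fin m) := ⟨⟨0, hm0⟩⟩
  refine palpha_stepMap hα (fun k => measurableSet_Icc) (fun k => mu01_Icc_mul hα.le
    (Nat.cast_nonneg _) ?_) ((pairwise_aedisjoint_Icc_mul mu01 hα.le).comp_of_injective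
      Fin.val_injective) a
  calc ((k : ℝ) + 1) * α ≤ m * α := by gcongr; exact_mod_cast k.isLt
    _ ≤ 1 := hm

lemma iSup_abs_single_one {ι : Type*} [Finite ι] [DecidableEq ι] (k : ι) :
    ⨆ j, |Pi.single k (1 : ℝ) j| = 1 :=
  have : Nonempty ι := ⟨k⟩
  le_antisymm (ciSup_le fun j => by by_cases h : j = k <;> simp [h])
    (le_ciSup_of_le (Set.finite_range _).bddAbove k (by simp))

/-- For `α ∈ (0,1)`, the space `X_α = (L_1[0,1], p_α)` contains a
subspace isometric to `ℓ_∞^m`, `m = ⌊1/α⌋`: the span of the indicator functions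
`χ_{[0,α]}, χ_{[α,2α]}, …, χ_{[(m−1)α, mα]}`, on which
`p_α(Σ_{k=1}^m a_k χ_{[(k−1)α,kα]}) = max_k |a_k|`. Consequently the Banach–Mazur
distance `d(X_α, L_1[0,1]) → ∞` as `α → 0`. -/
theorem stmt19 (α : ℝ) (hα : α ∈ Set.Ioo (0 : ℝ) 1) :
    -- the isometric copy of `ℓ_∞^m`, `m = ⌊1/α⌋`
    (∀ a : Fin (Nat.floor (1 / α)) → ℝ,
      palpha α (fun t => ∑ k : Fin (Nat.floor (1 / α)),
          Set.indicator (Set.Icc ((k : ℝ) * α) (((k : ℝ) + 1) * α)) (fun _ => a k) t)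
        = ⨆ k : Fin (Nat.floor (1 / α)), |a k|) ∧
    -- the Banach–Mazur distance from `X_α` to `L_1[0,1]` tends to `∞` as `α → 0`
    (∀ M : ℝ, ∃ α₀ : ℝ, 0 < α₀ ∧ ∀ β : ℝ, 0 < β → β < α₀ →
      ∀ (T : (ℝ → ℝ) ≃ₗ[ℝ] (ℝ → ℝ)) (c₁ c₂ : ℝ), 0 < c₁ → 0 < c₂ →
        (∀ f : ℝ → ℝ, Integrable f mu01 →
          Integrable (T f) mu01 ∧ (∫ t, |T f t| ∂mu01) ≤ c₁ * palpha β f) →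
        (∀ f : ℝ → ℝ, Integrable f mu01 →
          Integrable (T.symm f) mu01 ∧ palpha β (T.symm f) ≤ c₂ * ∫ t, |f t| ∂mu01) →
        M ≤ c₁ * c₂) := by
  have hfloor {β : ℝ} (hβ : 0 < β) : (⌊1 / β⌋₊ : ℝ) * β ≤ 1 :=
    (le_div_iff₀ hβ).1 (by simpa using Nat.floor_le (one_div_pos.2 hβ).le)
  have hfloor_pos {β : ℝ} (hβ : 0 < β) (hβ1 : β ≤ 1) : 0 < ⌊1 / β⌋₊ :=
    Nat.floor_pos.2 ((one_le_div hβ).2 hβ1)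
  refine ⟨palpha_stepMap_blocks hα.1 (hfloor_pos hα.1 hα.2.le) (hfloor hα.1), fun M => ?_⟩
  refine ⟨1 / (3 * M ^ 2 + 1), by positivity, fun β hβ hβα₀ T c₁ c₂ hc₁ hc₂ hT hTS => ?_⟩
  have hβinv : 3 * M ^ 2 + 1 < 1 / β := by
    rwa [lt_one_div (by positivity) hβ]
  have hβ1 : β ≤ 1 := (hβα₀.trans_le (div_le_one_of_le₀ (by nlinarith) (by positivity))).le
  have hM : 3 * M ^ 2 < ⌊1 / β⌋₊ := by linarith [Nat.lt_floor_add_one (1 / β)]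
  have hint (a : Fin ⌊1 / β⌋₊ → ℝ) :=
    integrable_stepMap (μ := mu01) (I := blocks β _) (fun _ => measurableSet_Icc) a
  have hpalpha := palpha_stepMap_blocks hβ (hfloor_pos hβ hβ1) (hfloor hβ)
  have : Nonempty (Fin ⌊1 / β⌋₊) := ⟨⟨0, hfloor_pos hβ hβ1⟩⟩
  have hcard := card_le_of_unit_lower_of_sign_upper (μ := mu01) (c₁ := c₁)
    (T.toLinearMap ∘ₗ stepMap (blocks β ⌊1 / β⌋₊)) (fun a => (hT _ (hint a)).1) hc₂.le
    (fun k => by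
      simpa [hpalpha, iSup_abs_single_one] using (hTS _ (hT _ (hint (Pi.single k 1))).1).2)
    (fun ε hε => by
      simpa [hpalpha, hε] using (hT _ (hint ε)).2)
  rw [Fintype.card_fin] at hcard
  exact (le_abs_self M).trans (abs_lt_of_sq_lt_sq (by nlinarith) (by positivity)).le
end
end
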